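/- Let L/K be a finite separable H-Galois extension, where H is a finite-dimensional Hopf K-algebra. Then for every left ideal two-sided coideal I ⊆ H, the fixed field L^I is an H-subextension of L/K and J(L^I) = I. -/

import Mathlib

open TensorProduct

section Defs

variable (K L H : Type) [Field K] [Field L] [Algebra K L] [Ring H] [HopfAlgebra K H]

/-- `L` is a left `H`-module algebra via `α`. -/
def IsModuleAlgebra (α : H →ₐ[K] Module.End K L) : Prop :=
  (∀ h : H, α h 1 = Coalgebra.counit (R := K) h • (1 : L)) ∧
  ∀ h : H,
    (α h : L →ₗ[K] L) ∘ₗ LinearMap.mul' K L =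
      LinearMap.mul' K L ∘ₗ
        TensorProduct.homTensorHomMap (RingHom.id K) L L L L
          (TensorProduct.map (α.toLinearMap : H →ₗ[K] (L →ₗ[K] L))
            (α.toLinearMap : H →ₗ[K] (L →ₗ[K] L)) (Coalgebra.comul (R := K) h))

noncomputable def lsmulLift (V M : Type) [AddCommGroup V] [Module K V] [AddCommGroup M]
    [Module K M] [Module L M] [IsScalarTower K L M] [SMulCommClass K L M]
    (φ : V →ₗ[K] M) : L ⊗[K] V →ₗ[K] M :=
  TensorProduct.lift
    (LinearMap.mk₂ K (fun (x : L) (v : V) => x • φ v)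
      (fun x x' v => add_smul x x' (φ v))
      (fun c x v => smul_assoc c x (φ v))
      (fun x v v' => by (try dsimp only); rw [map_add, smul_add])
      (fun c x v => by (try dsimp only); rw [map_smul, smul_comm]))

/-- The canonical (Galois) map `L ⊗[K] H →ₗ[K] End_K(L)`, `x ⊗ h ↦ (y ↦ x * α h y)`. -/
noncomputable def canMap (α : H →ₐ[K] Module.End K L) : L ⊗[K] H →ₗ[K] (L →ₗ[K] L) :=
  lsmulLift K L H (L →ₗ[K] L) (α.toLinearMap : H →ₗ[K] (L →ₗ[K] L))

/-- The annihilator `J(L0)` of an intermediate field. -/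
def Jann (α : H →ₐ[K] Module.End K L) (L0 : IntermediateField K L) : Submodule K H where
  carrier := {h : H | ∀ x ∈ L0, α h x = 0}
  add_mem' := by
    intro a b ha hb x hx
    simp [map_add, LinearMap.add_apply, ha x hx, hb x hx]
  zero_mem' := by intro x hx; simp
  smul_mem' := by
    intro c a ha x hx
    simp [map_smul, LinearMap.smul_apply, ha x hx]

/-- The map `H →ₗ[K] Hom_K(L0, L)`, `h ↦ (α h)|_{L0}`. -/
def resMap (α : H →ₐ[K] Module.End K L) (L0 : IntermediateField K L) :
    H →ₗ[K] (↥L0 →ₗ[K] L) where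
  toFun h := (α h : L →ₗ[K] L) ∘ₗ L0.val.toLinearMap
  map_add' h h' := by ext x; simp
  map_smul' c h := by ext x; simp

lemma Jann_le_ker (α : H →ₐ[K] Module.End K L) (L0 : IntermediateField K L) :
    Jann K L H α L0 ≤ LinearMap.ker (resMap K L H α L0) := by
  intro h hh
  rw [LinearMap.mem_ker]
  ext x
  exact hh x x.2

/-- The induced canonical map `L ⊗[K] (H / J(L0)) →ₗ[K] Hom_K(L0, L)`. -/
noncomputable def can0 (α : H →ₐ[K] Module.End K L) (L0 : IntermediateField K L) :
    L ⊗[K] (H ⧸ Jann K L H α L0) →ₗ[K] (↥L0 →ₗ[K] L) :=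
  lsmulLift K L (H ⧸ Jann K L H α L0) (↥L0 →ₗ[K] L)
    ((Jann K L H α L0).liftQ (resMap K L H α L0) (Jann_le_ker K L H α L0))

/-- `L0` is an `H`-subextension: the induced canonical map is injective. -/
def IsHSubextension (α : H →ₐ[K] Module.End K L) (L0 : IntermediateField K L) : Prop :=
  Function.Injective (can0 K L H α L0)

end Defs

section Coideal

variable (K H : Type) [Field K] [Ring H] [Bialgebra K H]

/-- `I` is a two-sided coideal: `ε(I) = 0` and `Δ(I) ⊆ H ⊗ I + I ⊗ H`. -/
def IsTwoSidedCoideal (I : Submodule K H) : Prop :=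
  (∀ i ∈ I, Coalgebra.counit (R := K) i = 0) ∧
  ∀ i ∈ I, Coalgebra.comul (R := K) i ∈
    LinearMap.range (TensorProduct.map (LinearMap.id : H →ₗ[K] H) I.subtype) ⊔
      LinearMap.range (TensorProduct.map I.subtype (LinearMap.id : H →ₗ[K] H))

/-- `I` is a left ideal of the algebra `H`. -/
def IsLeftIdeal (I : Submodule K H) : Prop :=
  ∀ h : H, ∀ i ∈ I, h * i ∈ I

end Coideal

section Aux

variable {K L H : Type} [Field K] [Field L] [Algebra K L] [Ring H] [HopfAlgebra K H]

/-- Evaluation of the action at a fixed element `x : L`, as a linear map `H →ₗ[K] L`. -/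
def evA (α : H →ₐ[K] Module.End K L) (x : L) : H →ₗ[K] L where
  toFun h := α h x
  map_add' a b := by simp
  map_smul' c a := by simp

@[simp] lemma evA_apply (α : H →ₐ[K] Module.End K L) (x : L) (h : H) :
    evA α x h = α h x := rfl

/-- The map `H ⊗ H →ₗ L`, `a ⊗ b ↦ α a x * α b y`. -/
noncomputable def psiMap (α : H →ₐ[K] Module.End K L) (x y : L) : H ⊗[K] H →ₗ[K] L :=
  (LinearMap.mul' K L).comp (TensorProduct.map (evA α x) (evA α y))

lemma keyEq (α : H →ₐ[K] Module.End K L) (hMA : IsModuleAlgebra K L H α) (h : H) (x y : L) :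
    α h (x * y) = psiMap α x y (Coalgebra.comul (R := K) h) := by
  have h1 := LinearMap.congr_fun (hMA.2 h) (x ⊗ₜ[K] y)
  have h2 : ∀ c : H ⊗[K] H,
      LinearMap.mul' K L ((TensorProduct.homTensorHomMap (RingHom.id K) L L L L
        (TensorProduct.map (α.toLinearMap : H →ₗ[K] (L →ₗ[K] L))
          (α.toLinearMap : H →ₗ[K] (L →ₗ[K] L)) c)) (x ⊗ₜ[K] y)) = psiMap α x y c := by
    intro c
    induction c using TensorProduct.induction_on with
    | zero => simp [psiMap]
    | tmul a b => simp [psiMap, TensorProduct.homTensorHomMap_apply, LinearMap.mul'_apply]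
    | add u v hu hv => simp only [map_add, LinearMap.add_apply, hu, hv]
  simpa only [LinearMap.comp_apply, LinearMap.mul'_apply, h2] using h1

/-- The fixed subalgebra `L^I`. -/
def fixedSubalgebra (α : H →ₐ[K] Module.End K L) (hMA : IsModuleAlgebra K L H α)
    (I : Submodule K H) (hIc : IsTwoSidedCoideal K H I) : Subalgebra K L where
  carrier := {x : L | ∀ i ∈ I, α i x = 0}
  mul_mem' := by
    intro x y hx hy i hi
    rw [keyEq α hMA i x y]
    have hr : ∀ u' : H ⊗[K] ↥I,
        psiMap α x y (TensorProduct.map LinearMap.id I.subtype u') = 0 := by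
      intro u'
      induction u' using TensorProduct.induction_on with
      | zero => simp
      | tmul a b =>
        obtain ⟨j, hj⟩ := b
        simp [psiMap, LinearMap.mul'_apply, hy j hj]
      | add s t hs ht => simp only [map_add, hs, ht, add_zero]
    have hl : ∀ v' : ↥I ⊗[K] H,
        psiMap α x y (TensorProduct.map I.subtype LinearMap.id v') = 0 := by
      intro v'
      induction v' using TensorProduct.induction_on with
      | zero => simp
      | tmul a b =>
        obtain ⟨j, hj⟩ := a
        simp [psiMap, LinearMap.mul'_apply, hx j hj]
      | add s t hs ht => simp only [map_add, hs, ht, add_zero]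
    obtain ⟨u, hu, v, hv, huv⟩ := Submodule.mem_sup.mp (hIc.2 i hi)
    obtain ⟨u', rfl⟩ := hu
    obtain ⟨v', rfl⟩ := hv
    rw [← huv, map_add, hr u', hl v', add_zero]
  one_mem' := by
    intro i hi
    rw [hMA.1 i, hIc.1 i hi, zero_smul]
  add_mem' := by
    intro x y hx hy i hi
    rw [map_add, hx i hi, hy i hi, add_zero]
  zero_mem' := by intro i _; simp
  algebraMap_mem' := by
    intro c i hi
    have : (algebraMap K L) c = c • (1 : L) := Algebra.algebraMap_eq_smul_one c
    rw [this, map_smul, hMA.1 i, hIc.1 i hi, zero_smul, smul_zero]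

@[simp] lemma canMap_tmul (α : H →ₐ[K] Module.End K L) (x : L) (h : H) :
    canMap K L H α (x ⊗ₜ[K] h) = x • (α h : L →ₗ[K] L) := by
  simp [canMap, lsmulLift]

lemma canMap_tmul_apply (α : H →ₐ[K] Module.End K L) (x : L) (h : H) (z : L) :
    canMap K L H α (x ⊗ₜ[K] h) z = x * α h z := by
  simp [canMap_tmul, smul_eq_mul]

/-- The key composition identity: `can(x⊗h) ∘ can(y⊗i)` lies in `can(L ⊗ I)`. -/
lemma compEq (α : H →ₐ[K] Module.End K L) (hMA : IsModuleAlgebra K L H α)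
    (I : Submodule K H) (hIl : IsLeftIdeal K H I)
    (x y : L) (h : H) (i : H) (hi : i ∈ I) :
    (canMap K L H α (x ⊗ₜ[K] h)) ∘ₗ (canMap K L H α (y ⊗ₜ[K] i)) =
      canMap K L H α ((LinearMap.lTensor L I.subtype)
        ((TensorProduct.map ((LinearMap.mulLeft K x).comp (evA α y))
          (LinearMap.codRestrict I (LinearMap.mulRight K i) (fun b => hIl b i hi)))
            (Coalgebra.comul (R := K) h))) := by
  ext z
  have hz : (canMap K L H α (x ⊗ₜ[K] h)) ((canMap K L H α (y ⊗ₜ[K] i)) z)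
      = x * psiMap α y (α i z) (Coalgebra.comul (R := K) h) := by
    rw [canMap_tmul_apply, canMap_tmul_apply, keyEq α hMA h y (α i z)]
  rw [LinearMap.comp_apply, hz]
  generalize Coalgebra.comul (R := K) h = c
  induction c using TensorProduct.induction_on with
  | zero => simp
  | tmul a b =>
    simp only [TensorProduct.map_tmul, LinearMap.lTensor_tmul, psiMap, LinearMap.comp_apply,
      TensorProduct.map_tmul, LinearMap.mul'_apply, evA_apply, LinearMap.mulLeft_apply,
      Submodule.coe_subtype, LinearMap.codRestrict_apply, LinearMap.mulRight_apply,
      canMap_tmul_apply]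
    change x * ((α a) y * (α b) ((α i) z)) = x * (α a) y * (α (b * i)) z
    rw [map_mul α b i]
    simp only [Module.End.mul_apply]
    ring
  | add s t hs ht => simp only [map_add, LinearMap.add_apply, mul_add, hs, ht]

/-- A left ideal of `End_K(V)` contains every endomorphism vanishing on its common kernel. -/
lemma leftIdeal_mem {V : Type} [AddCommGroup V] [Module K V] [FiniteDimensional K V]
    (W : Submodule K (V →ₗ[K] V)) (hW : ∀ g : V →ₗ[K] V, ∀ w ∈ W, g ∘ₗ w ∈ W)
    (f : V →ₗ[K] V) (hf : ∀ x : V, (∀ w ∈ W, w x = 0) → f x = 0) : f ∈ W := by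
  classical
  let n := Module.finrank K W
  let b : Module.Basis (Fin n) K W := Module.finBasis K W
  let F : V →ₗ[K] (Fin n → V) := LinearMap.pi fun j => ((b j : V →ₗ[K] V))
  have hker : LinearMap.ker F ≤ LinearMap.ker f := by
    intro x hx
    rw [LinearMap.mem_ker] at hx ⊢
    apply hf
    intro w hw
    let e : W →ₗ[K] V :=
      { toFun := fun w => (w : V →ₗ[K] V) x
        map_add' := fun a b => by simp
        map_smul' := fun c a => by simp }
    have he : e = 0 := b.ext fun j => by
      have : F x j = 0 := congrFun hx j
      simpa [e, F] using this
    have : e ⟨w, hw⟩ = 0 := by rw [he]; rfl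
    simpa [e] using this
  have hF' : LinearMap.ker ((LinearMap.ker F).liftQ F le_rfl) = ⊥ :=
    Submodule.ker_liftQ_eq_bot _ _ le_rfl le_rfl
  obtain ⟨g, hg⟩ := LinearMap.exists_leftInverse_of_injective _ hF'
  let hmap : (Fin n → V) →ₗ[K] V := ((LinearMap.ker F).liftQ f hker) ∘ₗ g
  have hhF : ∀ x : V, hmap (F x) = f x := by
    intro x
    have e1 : F x = ((LinearMap.ker F).liftQ F le_rfl) ((LinearMap.ker F).mkQ x) :=
      (LinearMap.congr_fun (Submodule.liftQ_mkQ (p := LinearMap.ker F) F le_rfl) x).symm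
    have e2 : g (((LinearMap.ker F).liftQ F le_rfl) ((LinearMap.ker F).mkQ x))
        = (LinearMap.ker F).mkQ x := LinearMap.congr_fun hg _
    calc hmap (F x) = ((LinearMap.ker F).liftQ f hker) (g (F x)) := rfl
      _ = ((LinearMap.ker F).liftQ f hker) ((LinearMap.ker F).mkQ x) := by rw [e1, e2]
      _ = f x := LinearMap.congr_fun (Submodule.liftQ_mkQ (p := LinearMap.ker F) f hker) x
  have hsum : f = ∑ j : Fin n,
      (hmap ∘ₗ LinearMap.single K (fun _ : Fin n => V) j) ∘ₗ ((b j : V →ₗ[K] V)) := by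
    ext x
    have h2 : F x = ∑ j : Fin n, Pi.single j ((b j : V →ₗ[K] V) x) :=
      (Finset.univ_sum_single (F x)).symm
    rw [← hhF x]
    simp only [LinearMap.comp_apply, LinearMap.sum_apply]
    rw [h2, map_sum]
    simp [LinearMap.single_apply]
  rw [hsum]
  exact Submodule.sum_mem _ fun j _ => hW _ _ (b j).2

end Aux


section Statement

variable (K L H : Type) [Field K] [Field L] [Algebra K L] [Ring H] [HopfAlgebra K H]

/-- For a finite separable `H`-Galois extension `L/K` and a left ideal two-sided coideal
`I ⊆ H`, the fixed field `L^I` is an `H`-subextension and `J(L^I) = I`. -/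
theorem fixedField_isHSubextension_and_Jann_eq [FiniteDimensional K L]
    [Algebra.IsSeparable K L] [FiniteDimensional K H]
    (α : H →ₐ[K] Module.End K L) (hMA : IsModuleAlgebra K L H α)
    (hGal : Function.Bijective (canMap K L H α))
    (I : Submodule K H) (hIl : IsLeftIdeal K H I) (hIc : IsTwoSidedCoideal K H I) :
    ∃ L0 : IntermediateField K L,
      (L0 : Set L) = {x : L | ∀ h ∈ I, α h x = Coalgebra.counit (R := K) h • x} ∧
      IsHSubextension K L H α L0 ∧ Jann K L H α L0 = I := by
  classical
  have hε : ∀ i ∈ I, Coalgebra.counit (R := K) i = 0 := hIc.1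
  haveI halg : Algebra.IsAlgebraic K L := Algebra.IsAlgebraic.of_finite K L
  set S : Subalgebra K L := fixedSubalgebra α hMA I hIc with hS
  have hSalg : S.IsAlgebraic := fun x _ => Algebra.IsAlgebraic.isAlgebraic x
  set L0 : IntermediateField K L := hSalg.toIntermediateField with hL0
  have hmemL0 : ∀ x : L, x ∈ L0 ↔ ∀ i ∈ I, α i x = 0 := fun x => Iff.rfl
  set T : Submodule K (L ⊗[K] H) := LinearMap.range (LinearMap.lTensor L I.subtype) with hT
  set W : Submodule K (L →ₗ[K] L) := T.map (canMap K L H α) with hW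
  -- elements of W vanish on the fixed algebra
  have hWvanish : ∀ t : L ⊗[K] ↥I, ∀ x : L, (∀ i ∈ I, α i x = 0) →
      canMap K L H α (LinearMap.lTensor L I.subtype t) x = 0 := by
    intro t x hx
    induction t using TensorProduct.induction_on with
    | zero => simp
    | tmul y w =>
      obtain ⟨i, hi⟩ := w
      rw [LinearMap.lTensor_tmul]
      simp [canMap_tmul_apply, hx i hi]
    | add s t hs ht => rw [map_add, map_add]; rw [LinearMap.add_apply, hs, ht, add_zero]
  -- W is a left ideal of End
  have hWleft : ∀ g : L →ₗ[K] L, ∀ w ∈ W, g ∘ₗ w ∈ W := by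
    intro g w hw
    obtain ⟨t, ht, rfl⟩ := hw
    obtain ⟨t', rfl⟩ := ht
    obtain ⟨s, rfl⟩ := hGal.2 g
    induction s using TensorProduct.induction_on with
    | zero => rw [map_zero, LinearMap.zero_comp]; exact W.zero_mem
    | tmul x h =>
      induction t' using TensorProduct.induction_on with
      | zero => rw [map_zero, map_zero, LinearMap.comp_zero]; exact W.zero_mem
      | tmul y w =>
        obtain ⟨i, hi⟩ := w
        rw [LinearMap.lTensor_tmul, Submodule.coe_subtype]
        rw [compEq α hMA I hIl x y h i hi]
        exact Submodule.mem_map_of_mem ⟨_, rfl⟩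
      | add u v hu hv =>
        rw [map_add, map_add, LinearMap.comp_add]; exact W.add_mem hu hv
    | add s1 s2 h1 h2 =>
      rw [map_add, LinearMap.add_comp]; exact W.add_mem h1 h2
  -- common kernel of W is exactly the fixed algebra
  have hfix : ∀ x : L, (∀ w ∈ W, w x = 0) → (∀ i ∈ I, α i x = 0) := by
    intro x hx i hi
    have hmem : canMap K L H α
        (LinearMap.lTensor L I.subtype ((1 : L) ⊗ₜ[K] (⟨i, hi⟩ : ↥I))) ∈ W :=
      Submodule.mem_map_of_mem ⟨_, rfl⟩
    have h0 := hx _ hmem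
    rw [LinearMap.lTensor_tmul] at h0
    rw [Submodule.coe_subtype, canMap_tmul_apply, one_mul] at h0
    exact h0
  -- every endomorphism vanishing on the fixed algebra lies in W
  have hannW : ∀ f : L →ₗ[K] L, (∀ x ∈ S, f x = 0) → f ∈ W := by
    intro f hf
    exact leftIdeal_mem W hWleft f fun x hx => hf x (fun i hi => hfix x hx i hi)
  -- a functional φ with φ 1 = 1
  obtain ⟨φ, hφ⟩ := LinearMap.exists_leftInverse_of_injective
    (LinearMap.toSpanSingleton K L 1) (LinearMap.ker_toSpanSingleton K (one_ne_zero : (1 : L) ≠ 0))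
  have hφ1 : φ 1 = 1 := by
    have h1 := LinearMap.congr_fun hφ 1
    simpa [LinearMap.toSpanSingleton_apply] using h1
  -- extraction: if 1 ⊗ h comes from L ⊗ I then h ∈ I
  have hextract : ∀ (h' : H) (t' : L ⊗[K] ↥I),
      LinearMap.lTensor L I.subtype t' = (1 : L) ⊗ₜ[K] h' → h' ∈ I := by
    intro h' t' ht'
    have hmemI : ∀ t : L ⊗[K] ↥I,
        (TensorProduct.lid K H) ((TensorProduct.map φ LinearMap.id)
          (LinearMap.lTensor L I.subtype t)) ∈ I := by
      intro t
      induction t using TensorProduct.induction_on with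
      | zero => simp
      | tmul y w =>
        obtain ⟨i, hi⟩ := w
        rw [LinearMap.lTensor_tmul, Submodule.coe_subtype, TensorProduct.map_tmul]
        rw [LinearMap.id_coe, id_eq, TensorProduct.lid_tmul]
        exact I.smul_mem (φ y) hi
      | add u v hu hv =>
        rw [map_add, map_add, map_add]; exact I.add_mem hu hv
    have h2 := hmemI t'
    rw [ht', TensorProduct.map_tmul, LinearMap.id_coe, id_eq, TensorProduct.lid_tmul,
      hφ1, one_smul] at h2
    exact h2
  -- J(L0) = I
  have hJI : Jann K L H α L0 = I := by
    apply le_antisymm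
    · intro h' hh'
      have hfW : (α h' : L →ₗ[K] L) ∈ W := hannW _ fun x hx => hh' x hx
      obtain ⟨t, ht, hct⟩ := hfW
      obtain ⟨t', rfl⟩ := ht
      have h1 : canMap K L H α ((1 : L) ⊗ₜ[K] h') = (α h' : L →ₗ[K] L) := by
        rw [canMap_tmul]; exact one_smul L _
      exact hextract h' t' (hGal.1 (hct.trans h1.symm))
    · intro i hi x hx
      exact hx i hi
  refine ⟨L0, ?_, ?_, hJI⟩
  · ext x
    simp only [SetLike.mem_coe, hmemL0, Set.mem_setOf_eq]
    constructor
    · intro hx h hh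
      rw [hε h hh, zero_smul]
      exact hx h hh
    · intro hx h hh
      have h3 := hx h hh
      rwa [hε h hh, zero_smul] at h3
  · -- H-subextension
    intro u v huv
    suffices hker0 : ∀ w : L ⊗[K] (H ⧸ Jann K L H α L0), can0 K L H α L0 w = 0 → w = 0 by
      have h4 := hker0 (u - v) (by rw [map_sub, huv, sub_self])
      exact sub_eq_zero.mp h4
    intro w hw
    obtain ⟨t, rfl⟩ := LinearMap.lTensor_surjective L
      (Submodule.mkQ_surjective (Jann K L H α L0)) w
    have hcomp : ∀ t : L ⊗[K] H,
        can0 K L H α L0 (LinearMap.lTensor L (Jann K L H α L0).mkQ t)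
          = (canMap K L H α t) ∘ₗ L0.val.toLinearMap := by
      intro t
      induction t using TensorProduct.induction_on with
      | zero => simp
      | tmul x h =>
        rw [LinearMap.lTensor_tmul]
        ext z
        simp [can0, lsmulLift, resMap, canMap_tmul, smul_eq_mul,
          Submodule.mkQ_apply, Submodule.liftQ_apply]
      | add a b ha hb =>
        simp only [map_add, ha, hb, LinearMap.add_comp]
    rw [hcomp t] at hw
    have hvan : ∀ x ∈ S, canMap K L H α t x = 0 := by
      intro x hx
      have h5 := LinearMap.congr_fun hw (⟨x, hx⟩ : ↥L0)
      simpa using h5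
    obtain ⟨t1, ht1, hct1⟩ := hannW _ hvan
    obtain ⟨t', rfl⟩ := ht1
    have hteq : LinearMap.lTensor L I.subtype t' = t := hGal.1 hct1
    rw [← hteq]
    have hzero : (Jann K L H α L0).mkQ ∘ₗ I.subtype = 0 := by
      ext w'
      simp only [LinearMap.comp_apply, Submodule.coe_subtype, Submodule.mkQ_apply,
        LinearMap.zero_apply]
      exact (Submodule.Quotient.mk_eq_zero _).mpr (hJI.ge w'.2)
    calc LinearMap.lTensor L (Jann K L H α L0).mkQ (LinearMap.lTensor L I.subtype t')
        = LinearMap.lTensor L ((Jann K L H α L0).mkQ ∘ₗ I.subtype) t' := by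
          rw [LinearMap.lTensor_comp]; rfl
      _ = 0 := by rw [hzero, LinearMap.lTensor_zero]; rfl

end Statement
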